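/- If merge typing on variables were allowed with lbl(x) = ∅ (so rule (⊕_l) always applies to R ⊕ x), subject reduction fails: there exist a record R, types σ, τ, ρ, and a term N with Γ ⊢ N : ρ and Γ ⊬ N : τ, such that Γ ⊢ (λx.(R ⊕ x))⟨a=N⟩ : ⟨a:τ⟩ is derivable but Γ ⊢ R ⊕ ⟨a=N⟩ : ⟨a:τ⟩ is not, even though (λx.(R ⊕ x))⟨a=N⟩ β-reduces to R ⊕ ⟨a=N⟩. -/
import Mathlib


/-- Intersection types with record types: σ,τ ::= α | t | ω | σ→τ | σ∩τ | ⟨a:σ⟩. -/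
inductive Ty : Type
  | tvar : ℕ → Ty
  | tconst : ℕ → Ty
  | omega : Ty
  | arrow : Ty → Ty → Ty
  | inter : Ty → Ty → Ty
  | rcd : ℕ → Ty → Ty

/-- The type-inclusion preorder (BCD extended with record axioms). -/
inductive Subt : Ty → Ty → Prop
  | refl (σ) : Subt σ σ
  | trans {σ τ ρ} : Subt σ τ → Subt τ ρ → Subt σ ρ
  | top (σ) : Subt σ .omega
  | omegaArrow : Subt .omega (.arrow .omega .omega)
  | interLeft (σ τ) : Subt (.inter σ τ) σ
  | interRight (σ τ) : Subt (.inter σ τ) τ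
  | arrowInter (σ τ₁ τ₂) : Subt (.inter (.arrow σ τ₁) (.arrow σ τ₂)) (.arrow σ (.inter τ₁ τ₂))
  | interGlb {σ τ₁ τ₂} : Subt σ τ₁ → Subt σ τ₂ → Subt σ (.inter τ₁ τ₂)
  | arrowMono {σ₁ σ₂ τ₁ τ₂} : Subt σ₂ σ₁ → Subt τ₁ τ₂ → Subt (.arrow σ₁ τ₁) (.arrow σ₂ τ₂)
  | rcdMono {a σ τ} : Subt σ τ → Subt (.rcd a σ) (.rcd a τ)
  | rcdInter (a σ τ) : Subt (.inter (.rcd a σ) (.rcd a τ)) (.rcd a (.inter σ τ))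

/-- A finite intersection ⋂ᵢ ⟨aᵢ:σᵢ⟩ of record types (ω for the empty list). -/
def recTy : List (ℕ × Ty) → Ty
  | [] => .omega
  | [(a, σ)] => .rcd a σ
  | (a, σ) :: t => .inter (.rcd a σ) (recTy t)

mutual
/-- Terms of the extension of Λ_R where merge R ⊕ N allows an arbitrary term
(in particular a variable) on the right. -/
inductive Tm : Type
  | var : ℕ → Tm
  | lit : ℤ → Tm
  | lam : ℕ → Tm → Tm
  | app : Tm → Tm → Tm
  | rcd : Rcd → Tm
  | sel : Tm → ℕ → Tm
  | mrg : Tm → Tm → Tm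
inductive Rcd : Type
  | nil : Rcd
  | cons : ℕ → Tm → Rcd → Rcd
end

def Rcd.find : Rcd → ℕ → Option Tm
  | .nil, _ => none
  | .cons a M r, b => if a = b then some M else r.find b

def Rcd.lbls : Rcd → List ℕ
  | .nil => []
  | .cons a _ r => a :: r.lbls

/-- lbl, extended so that lbl(x) = ∅ for variables (and non-records). -/
def Tm.lbl : Tm → List ℕ
  | .rcd r => r.lbls
  | _ => []

def Rcd.restrict : Rcd → List ℕ → Rcd
  | .nil, _ => .nil
  | .cons a M r, L => if a ∈ L then r.restrict L else .cons a M (r.restrict L)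

def Rcd.append : Rcd → Rcd → Rcd
  | .nil, s => s
  | .cons a M r, s => .cons a M (r.append s)

def Rcd.mergeR (r s : Rcd) : Rcd := (r.restrict s.lbls).append s

mutual
def Tm.subst : Tm → ℕ → Tm → Tm
  | .var y, x, N => if y = x then N else .var y
  | .lit n, _, _ => .lit n
  | .lam y M, x, N => if y = x then .lam y M else .lam y (M.subst x N)
  | .app M₁ M₂, x, N => .app (M₁.subst x N) (M₂.subst x N)
  | .rcd r, x, N => .rcd (r.substR x N)
  | .sel M a, x, N => .sel (M.subst x N) a
  | .mrg M M', x, N => .mrg (M.subst x N) (M'.subst x N)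
def Rcd.substR : Rcd → ℕ → Tm → Rcd
  | .nil, _, _ => .nil
  | .cons a M r, x, N => .cons a (M.subst x N) (r.substR x N)
end

mutual
/-- One-step reduction: β, record selection, record merge, closed under contexts. -/
inductive Red : Tm → Tm → Prop
  | beta (x M N) : Red (.app (.lam x M) N) (M.subst x N)
  | rsel {r : Rcd} {a M} : r.find a = some M → Red (.sel (.rcd r) a) M
  | mergeRed (r s : Rcd) : Red (.mrg (.rcd r) (.rcd s)) (.rcd (r.mergeR s))
  | lamC {x M M'} : Red M M' → Red (.lam x M) (.lam x M')
  | appL {M M' N} : Red M M' → Red (.app M N) (.app M' N)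
  | appR {M N N'} : Red N N' → Red (.app M N) (.app M N')
  | rcdC {r r'} : RedR r r' → Red (.rcd r) (.rcd r')
  | selC {M M' a} : Red M M' → Red (.sel M a) (.sel M' a)
  | mrgL {M M' N} : Red M M' → Red (.mrg M N) (.mrg M' N)
  | mrgR {M N N'} : Red N N' → Red (.mrg M N) (.mrg M N')
inductive RedR : Rcd → Rcd → Prop
  | head {a M M' r} : Red M M' → RedR (.cons a M r) (.cons a M' r)
  | tail {a M r r'} : RedR r r' → RedR (.cons a M r) (.cons a M r')
end

def IntTy : Ty := .tconst 0

/-- The type assignment system with rule (⊕_l) applied with lbl(x) = ∅. -/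
inductive Der : (ℕ → Ty) → Tm → Ty → Prop
  | var (Γ x) : Der Γ (.var x) (Γ x)
  | lit (Γ n) : Der Γ (.lit n) IntTy
  | lamI {Γ x M σ τ} : Der (Function.update Γ x σ) M τ → Der Γ (.lam x M) (.arrow σ τ)
  | appE {Γ M N σ τ} : Der Γ M (.arrow σ τ) → Der Γ N σ → Der Γ (.app M N) τ
  | top (Γ M) : Der Γ M .omega
  | interI {Γ M σ τ} : Der Γ M σ → Der Γ M τ → Der Γ M (.inter σ τ)
  | sub {Γ M σ τ} : Der Γ M σ → Subt σ τ → Der Γ M τ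
  | sel {Γ M a σ} : Der Γ M (.rcd a σ) → Der Γ (.sel M a) σ
  | rcdI {Γ} {r : Rcd} {a M σ} : r.find a = some M → Der Γ M σ → Der Γ (.rcd r) (.rcd a σ)
  | mrgL {Γ M N a σ} : Der Γ M (.rcd a σ) → a ∉ N.lbl → Der Γ (.mrg M N) (.rcd a σ)
  | mrgR {Γ M} {r : Rcd} {a σ} : Der Γ (.rcd r) (.rcd a σ) → Der Γ (.mrg M (.rcd r)) (.rcd a σ)

/-- Interpretation killing type constants in "arrow-like" positions. -/
def J : Ty → Prop
  | .tvar _ => True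
  | .tconst _ => False
  | .omega => True
  | .arrow _ _ => True
  | .inter σ τ => J σ ∧ J τ
  | .rcd _ _ => True

/-- Interpretation constraining the label-0 component of record types. -/
def K : Ty → Prop
  | .tvar _ => True
  | .tconst _ => True
  | .omega => True
  | .arrow _ _ => True
  | .inter σ τ => K σ ∧ K τ
  | .rcd b σ => b = 0 → J σ

lemma J_mono {σ τ : Ty} (h : Subt σ τ) : J σ → J τ := by
  induction h with
  | refl => exact id
  | trans _ _ ih1 ih2 => exact ih2 ∘ ih1
  | top => intro _; trivial
  | omegaArrow => intro _; trivial
  | interLeft σ τ => exact fun h => h.1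
  | interRight σ τ => exact fun h => h.2
  | arrowInter => intro _; trivial
  | interGlb _ _ ih1 ih2 => exact fun h => ⟨ih1 h, ih2 h⟩
  | arrowMono => intro _; trivial
  | rcdMono => intro _; trivial
  | rcdInter => intro _; trivial

lemma K_mono {σ τ : Ty} (h : Subt σ τ) : K σ → K τ := by
  induction h with
  | refl => exact id
  | trans _ _ ih1 ih2 => exact ih2 ∘ ih1
  | top => intro _; trivial
  | omegaArrow => intro _; trivial
  | interLeft σ τ => exact fun h => h.1
  | interRight σ τ => exact fun h => h.2
  | arrowInter => intro _; trivial
  | interGlb _ _ ih1 ih2 => exact fun h => ⟨ih1 h, ih2 h⟩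
  | arrowMono => intro _; trivial
  | rcdMono hs => exact fun h hb => J_mono hs (h hb)
  | rcdInter => exact fun h hb => ⟨h.1 hb, h.2 hb⟩

/-- Any type derivable for a λ-abstraction satisfies J. -/
lemma der_lam_J {Γ T φ} (h : Der Γ T φ) : ∀ x M, T = Tm.lam x M → J φ := by
  induction h with
  | lamI _ => intro _ _ _; trivial
  | top => intro _ _ _; trivial
  | interI _ _ ih1 ih2 => exact fun x M hE => ⟨ih1 x M hE, ih2 x M hE⟩
  | sub _ hs ih => exact fun x M hE => J_mono hs (ih x M hE)
  | var => intro _ _ hE; cases hE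
  | lit => intro _ _ hE; cases hE
  | appE _ _ _ _ => intro _ _ hE; cases hE
  | sel _ _ => intro _ _ hE; cases hE
  | rcdI _ _ _ => intro _ _ hE; cases hE
  | mrgL _ _ _ => intro _ _ hE; cases hE
  | mrgR _ _ => intro _ _ hE; cases hE

def theN : Tm := .lam 1 (.var 1)
def theR : Rcd := .cons 0 (.lit 0) .nil
def theS : Rcd := .cons 0 theN .nil

/-- Any type derivable for the record ⟨0 = λy.y⟩ satisfies K. -/
lemma der_rcdS_K {Γ T φ} (h : Der Γ T φ) : T = Tm.rcd theS → K φ := by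
  induction h with
  | top => intro _; trivial
  | interI _ _ ih1 ih2 => exact fun hE => ⟨ih1 hE, ih2 hE⟩
  | sub _ hs ih => exact fun hE => K_mono hs (ih hE)
  | rcdI hf hd _ =>
      intro hE
      cases hE
      intro hb
      subst hb
      have : theS.find 0 = some theN := by simp [theS, Rcd.find]
      rw [this] at hf
      cases hf
      exact der_lam_J hd 1 (.var 1) rfl
  | var => intro hE; cases hE
  | lit => intro hE; cases hE
  | lamI _ => intro hE; cases hE
  | appE _ _ _ _ => intro hE; cases hE
  | sel _ _ => intro hE; cases hE
  | mrgL _ _ _ => intro hE; cases hE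
  | mrgR _ _ => intro hE; cases hE

/-- Any type derivable for the merge ⟨0=0⟩ ⊕ ⟨0 = λy.y⟩ satisfies K. -/
lemma der_mrg_K {Γ T φ} (h : Der Γ T φ) :
    T = Tm.mrg (.rcd theR) (.rcd theS) → K φ := by
  induction h with
  | top => intro _; trivial
  | interI _ _ ih1 ih2 => exact fun hE => ⟨ih1 hE, ih2 hE⟩
  | sub _ hs ih => exact fun hE => K_mono hs (ih hE)
  | mrgL _ hnl _ =>
      intro hE
      cases hE
      intro hb
      subst hb
      exact absurd (by simp [Tm.lbl, theS, Rcd.lbls]) hnl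
  | mrgR hd _ =>
      intro hE
      cases hE
      exact der_rcdS_K hd rfl
  | var => intro hE; cases hE
  | lit => intro hE; cases hE
  | lamI _ => intro hE; cases hE
  | appE _ _ _ _ => intro hE; cases hE
  | sel _ _ => intro hE; cases hE
  | rcdI _ _ _ => intro hE; cases hE

/-- with lbl(x) = ∅, rule (⊕_l) applies to R ⊕ x and subject
reduction fails: the β-redex (λx.(R ⊕ x))⟨a=N⟩ is typable by ⟨a:τ⟩ but its
β-reduct R ⊕ ⟨a=N⟩ is not, where Γ ⊢ N : ρ and Γ ⊬ N : τ (and σ ≡ ⟨a:ρ⟩). -/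
theorem merge_on_variables_breaks_subject_reduction :
    ∃ (Γ : ℕ → Ty) (r : Rcd) (a : ℕ) (σ τ ρ : Ty) (N : Tm),
      σ = Ty.rcd a ρ ∧
      Der Γ N ρ ∧ ¬ Der Γ N τ ∧
      Der Γ (.app (.lam 0 (.mrg (.rcd r) (.var 0))) (.rcd (.cons a N .nil))) (.rcd a τ) ∧
      ¬ Der Γ (.mrg (.rcd r) (.rcd (.cons a N .nil))) (.rcd a τ) ∧
      Red (.app (.lam 0 (.mrg (.rcd r) (.var 0))) (.rcd (.cons a N .nil)))
          (.mrg (.rcd r) (.rcd (.cons a N .nil))) := by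
  refine ⟨fun _ => .omega, theR, 0, Ty.rcd 0 (.arrow .omega .omega),
    IntTy, .arrow .omega .omega, theN, rfl, ?_, ?_, ?_, ?_, ?_⟩
  · exact .lamI (.top _ _)
  · intro h
    exact der_lam_J h 1 (.var 1) rfl
  · refine .appE (σ := .omega) (.lamI ?_) (.top _ _)
    refine .mrgL (.rcdI (r := theR) (a := 0) (M := .lit 0) ?_ (.lit _ _)) ?_
    · simp [theR, Rcd.find]
    · simp [Tm.lbl]
  · intro h
    exact der_mrg_K h rfl rfl
  · have h := Red.beta 0 (.mrg (.rcd theR) (.var 0)) (.rcd theS)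
    simpa [Tm.subst, Rcd.substR, theR, theS] using h
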